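/- Let G_a be the anti-tree of order a ≥ 1 (with sphere sizes |S_r| = (r+1)^a), equipped with the physical Laplacian (ν ≡ 1, μ ≡ 1 on edges). Then the Cheeger constant is h(G_a) = 2^a, and the Cheeger constant at infinity is h_∞(G_a) = 2 if a = 1 and h_∞(G_a) = ∞ if a ≥ 2. -/
import Mathlib

open Filter

/-- The boundary/volume ratio of the ball `B_r` in the quotient linear graph of the
anti-tree of order `a`: `|∂B_r| = (r+1)^a (r+2)^a` and `|B_r| = ∑_{i=0}^r (i+1)^a`. -/
noncomputable def antitreeRatio (a : ℕ) (r : ℕ) : ℝ :=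
  ((r + 1 : ℝ) ^ a * (r + 2 : ℝ) ^ a) / ∑ i ∈ Finset.range (r + 1), ((i : ℝ) + 1) ^ a

lemma antitree_sum_pos (a r : ℕ) :
    0 < ∑ i ∈ Finset.range (r + 1), ((i : ℝ) + 1) ^ a := by
  apply Finset.sum_pos
  · intro i _; positivity
  · exact ⟨0, Finset.mem_range.mpr (Nat.succ_pos r)⟩

lemma antitree_sum_le (a : ℕ) (ha : 1 ≤ a) (r : ℕ) :
    ∑ i ∈ Finset.range (r + 1), ((i : ℝ) + 1) ^ a
      ≤ (((r : ℝ) + 1) * ((r : ℝ) + 2) / 2) ^ a := by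
  induction r with
  | zero => simp
  | succ n ih =>
    rw [Finset.sum_range_succ]
    have h1 : (((n : ℝ) + 1) * ((n : ℝ) + 2) / 2) ^ a + ((n : ℝ) + 1 + 1) ^ a
        ≤ (((n : ℝ) + 1) * ((n : ℝ) + 2) / 2 + ((n : ℝ) + 2)) ^ a := by
      have := pow_add_pow_le (x := ((n : ℝ) + 1) * ((n : ℝ) + 2) / 2)
        (y := (n : ℝ) + 2) (by positivity) (by positivity) (Nat.one_le_iff_ne_zero.mp ha)
      calc (((n : ℝ) + 1) * ((n : ℝ) + 2) / 2) ^ a + ((n : ℝ) + 1 + 1) ^ a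
          = (((n : ℝ) + 1) * ((n : ℝ) + 2) / 2) ^ a + ((n : ℝ) + 2) ^ a := by ring_nf
        _ ≤ _ := this
    calc ∑ i ∈ Finset.range (n + 1), ((i : ℝ) + 1) ^ a + (((n : ℕ) + 1 : ℕ) + 1 : ℝ) ^ a
        ≤ (((n : ℝ) + 1) * ((n : ℝ) + 2) / 2) ^ a + (((n : ℕ) + 1 : ℕ) + 1 : ℝ) ^ a := by
          gcongr
      _ = (((n : ℝ) + 1) * ((n : ℝ) + 2) / 2) ^ a + ((n : ℝ) + 1 + 1) ^ a := by push_cast; ring_nf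
      _ ≤ (((n : ℝ) + 1) * ((n : ℝ) + 2) / 2 + ((n : ℝ) + 2)) ^ a := h1
      _ = _ := by push_cast; ring_nf

lemma antitree_ratio_ge (a : ℕ) (ha : 1 ≤ a) (r : ℕ) :
    (2 : ℝ) ^ a ≤ antitreeRatio a r := by
  unfold antitreeRatio
  rw [le_div_iff₀ (antitree_sum_pos a r)]
  calc (2 : ℝ) ^ a * ∑ i ∈ Finset.range (r + 1), ((i : ℝ) + 1) ^ a
      ≤ (2 : ℝ) ^ a * (((r : ℝ) + 1) * ((r : ℝ) + 2) / 2) ^ a := by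
        gcongr; exact antitree_sum_le a ha r
    _ = ((r : ℝ) + 1) ^ a * ((r : ℝ) + 2) ^ a := by
        rw [← mul_pow, ← mul_pow]; ring_nf
  
lemma antitree_ratio_zero (a : ℕ) : antitreeRatio a 0 = 2 ^ a := by
  simp [antitreeRatio]

/-- for the anti-tree `G_a` of order `a ≥ 1` with the physical Laplacian,
the Cheeger constant is `h(G_a) = inf_r |∂B_r|/|B_r| = 2^a`, and the Cheeger constant at
infinity `h_∞(G_a) = liminf_r |∂B_r|/|B_r|` equals `2` for `a = 1` and `∞` for `a ≥ 2`. -/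
theorem antitree_cheeger (a : ℕ) (ha : 1 ≤ a) :
    (⨅ r : ℕ, antitreeRatio a r) = 2 ^ a ∧
      (a = 1 → liminf (antitreeRatio a) atTop = 2) ∧
      (2 ≤ a → Tendsto (antitreeRatio a) atTop atTop) := by
  refine ⟨?_, ?_, ?_⟩
  · apply le_antisymm
    · calc (⨅ r : ℕ, antitreeRatio a r) ≤ antitreeRatio a 0 :=
            ciInf_le ⟨2 ^ a, fun x ⟨r, hr⟩ => hr ▸ antitree_ratio_ge a ha r⟩ 0
        _ = 2 ^ a := antitree_ratio_zero a
    · exact le_ciInf (antitree_ratio_ge a ha)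
  · intro h1
    subst h1
    have : antitreeRatio 1 = fun _ : ℕ => (2 : ℝ) := by
      funext r
      have hsum : ∑ i ∈ Finset.range (r + 1), ((i : ℝ) + 1) ^ 1
          = ((r : ℝ) + 1) * ((r : ℝ) + 2) / 2 := by
        induction r with
        | zero => norm_num
        | succ n ih =>
          rw [Finset.sum_range_succ, ih]; push_cast; ring
      unfold antitreeRatio
      rw [hsum]
      rw [div_eq_iff (by positivity)]
      ring
    rw [this, liminf_const]
  · intro h2
    have key : ∀ r : ℕ, ((r : ℝ) + 2) ≤ antitreeRatio a r := by
      intro r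
      unfold antitreeRatio
      rw [le_div_iff₀ (antitree_sum_pos a r)]
      have hs : ∑ i ∈ Finset.range (r + 1), ((i : ℝ) + 1) ^ a
          ≤ ((r : ℝ) + 1) * ((r : ℝ) + 1) ^ a := by
        calc ∑ i ∈ Finset.range (r + 1), ((i : ℝ) + 1) ^ a
            ≤ ∑ _i ∈ Finset.range (r + 1), ((r : ℝ) + 1) ^ a := by
              apply Finset.sum_le_sum
              intro i hi
              have : (i : ℝ) + 1 ≤ (r : ℝ) + 1 := by
                have := Finset.mem_range.mp hi
                have : (i : ℝ) ≤ r := by exact_mod_cast Nat.lt_succ_iff.mp this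
                linarith
              exact pow_le_pow_left₀ (by positivity) this a
          _ = ((r : ℝ) + 1) * ((r : ℝ) + 1) ^ a := by
              rw [Finset.sum_const, Finset.card_range]; push_cast; ring
      calc ((r : ℝ) + 2) * ∑ i ∈ Finset.range (r + 1), ((i : ℝ) + 1) ^ a
          ≤ ((r : ℝ) + 2) * (((r : ℝ) + 1) * ((r : ℝ) + 1) ^ a) := by gcongr
        _ = ((r : ℝ) + 1) ^ a * (((r : ℝ) + 2) * ((r : ℝ) + 1)) := by ring
        _ ≤ ((r : ℝ) + 1) ^ a * ((r : ℝ) + 2) ^ a := by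
            gcongr
            calc ((r : ℝ) + 2) * ((r : ℝ) + 1) ≤ ((r : ℝ) + 2) * ((r : ℝ) + 2) := by nlinarith [Nat.cast_nonneg (α := ℝ) r]
              _ = ((r : ℝ) + 2) ^ 2 := by ring
              _ ≤ ((r : ℝ) + 2) ^ a := pow_le_pow_right₀ (by linarith [Nat.cast_nonneg (α := ℝ) r]) h2
    apply tendsto_atTop_mono key
    have : Tendsto (fun r : ℕ => ((r : ℝ) + 2)) atTop atTop :=
      tendsto_atTop_add_const_right _ 2 tendsto_natCast_atTop_atTop
    exact this
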